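/- arXiv:2411.08080 — 2 statements merged into one kernel-verified Lean document; each statement's English description precedes it below -/
import Mathlib

section
/- (First fundamental theorem, left Caputo case.) Let a < b be real numbers and n ≥ 1 a natural number. Let k, κ : ℝ → ℝ be measurable, integrable on (0, b−a], and satisfy the modified Sonine condition of order n, with k (n−1)-times continuously differentiable on (0, b−a] and each derivative k⁽ʲ⁾ (0 ≤ j ≤ n−1) integrable on (0, b−a]. Let f : [a,b] → ℝ be continuous and suppose φ := I_κ f is n-times continuously differentiable on [a,b] with φ⁽ʲ⁾(a) = 0 for all 0 ≤ j ≤ n−1. Then for every x ∈ (a,b], ᶜD_k ( I_κ f )(x) = f(x). -/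
/-! Put `h := I_k φ⁽ⁿ⁾ - f`. The convolutions `I_θ` are associative, so the Sonine condition and
Taylor's formula with integral remainder (all `φ⁽ʲ⁾(a)` vanish) give
`I_κ (I_k φ⁽ⁿ⁾) = I_{tⁿ⁻¹/(n-1)!} φ⁽ⁿ⁾ = φ = I_κ f`, i.e. `I_κ h = 0`. Applying `I_k` and the Sonine
condition once more, the `n`-fold primitive `I_{tⁿ⁻¹/(n-1)!} h` of the continuous function `h`
vanishes, hence so does `h`. -/

open MeasureTheory intervalIntegral Set

/-- `leftConv a θ w` is the general fractional integral `I_θ w` with base point `a`;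
`leftConv 0 θ w` is the Laplace convolution of the Sonine condition. -/
noncomputable def leftConv (a : ℝ) (θ w : ℝ → ℝ) (x : ℝ) : ℝ := ∫ s in a..x, θ (x - s) * w s

noncomputable def powKernel (m : ℕ) (t : ℝ) : ℝ := t ^ m / m.factorial

section

variable {a b x : ℝ} {θ θ' ρ w w' : ℝ → ℝ}

theorem leftConv_eq_integral_sub (a : ℝ) (θ w : ℝ → ℝ) (x : ℝ) :
    leftConv a θ w x = ∫ t in 0..x - a, θ t * w (x - t) := by
  rw [leftConv]
  simpa using integral_comp_sub_left (fun t => θ t * w (x - t)) x (a := a) (b := x)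

theorem leftConv_zero_comm (θ w : ℝ → ℝ) (x : ℝ) : leftConv 0 θ w x = leftConv 0 w θ x := by
  rw [leftConv_eq_integral_sub, sub_zero, leftConv]
  simp only [mul_comm]

theorem leftConv_congr_kernel (hax : a ≤ x) (h : EqOn θ θ' (Ioo 0 (x - a))) :
    leftConv a θ w x = leftConv a θ' w x := by
  refine integral_congr_uIoo fun s hs => ?_
  rw [uIoo_of_le hax] at hs
  rw [h ⟨sub_pos.2 hs.2, sub_lt_sub_left hs.1 x⟩]

theorem leftConv_congr_fun (hax : a ≤ x) (h : EqOn w w' (Ioo a x)) :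
    leftConv a θ w x = leftConv a θ w' x := by
  refine integral_congr_uIoo fun s hs => ?_
  rw [uIoo_of_le hax] at hs
  rw [h hs]

theorem leftConv_one (a : ℝ) (w : ℝ → ℝ) (x : ℝ) :
    leftConv a (fun _ => 1) w x = ∫ s in a..x, w s := by
  simp only [leftConv, one_mul]

theorem leftConv_one_powKernel (m : ℕ) :
    leftConv 0 (fun _ => 1) (powKernel m) = powKernel (m + 1) := by
  ext y
  rw [leftConv_one]
  simp only [powKernel, intervalIntegral.integral_div, integral_pow, Nat.factorial_succ]
  push_cast
  field_simp
  ring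

theorem integrableOn_comp_sub_left (hθ : IntegrableOn θ (Ioc 0 (b - a))) (hx : x ∈ Icc a b) :
    IntegrableOn (fun s => θ (x - s)) (Ioc a x) := by
  have hθ' : IntervalIntegrable θ volume 0 (x - a) := by
    exact (intervalIntegrable_iff_integrableOn_Ioc_of_le (by linarith [hx.1])).2
      (hθ.mono_set (Ioc_subset_Ioc_right (by linarith [hx.2])))
  simpa [intervalIntegrable_iff_integrableOn_Ioc_of_le hx.1] using (hθ'.comp_sub_left x).symm

theorem integrableOn_leftConv_integrand (hθ : IntegrableOn θ (Ioc 0 (b - a)))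
    (hw : ContinuousOn w (Icc a b)) (hx : x ∈ Icc a b) :
    IntegrableOn (fun s => θ (x - s) * w s) (Ioc a x) :=
  (integrableOn_comp_sub_left hθ hx).mul_continuousOn_of_subset hw measurableSet_Ioc
    isCompact_Icc (Ioc_subset_Icc_self.trans (Icc_subset_Icc_right hx.2))

theorem leftConv_sub (hθ : IntegrableOn θ (Ioc 0 (b - a))) (hw : ContinuousOn w (Icc a b))
    (hw' : ContinuousOn w' (Icc a b)) (hx : x ∈ Icc a b) :
    leftConv a θ (fun s => w s - w' s) x = leftConv a θ w x - leftConv a θ w' x := by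
  simp only [leftConv, mul_sub]
  exact integral_sub
    ((intervalIntegrable_iff_integrableOn_Ioc_of_le hx.1).2
      (integrableOn_leftConv_integrand hθ hw hx))
    ((intervalIntegrable_iff_integrableOn_Ioc_of_le hx.1).2
      (integrableOn_leftConv_integrand hθ hw' hx))

theorem continuousOn_leftConv (hab : a ≤ b) (hθ : IntegrableOn θ (Ioc 0 (b - a)))
    (hw : ContinuousOn w (Icc a b)) : ContinuousOn (leftConv a θ w) (Icc a b) := by
  -- Extend `w` continuously to `ℝ` and integrate over the fixed range `(0, b - a]`, so that
  -- dominated convergence applies.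
  set v : ℝ → ℝ := fun t => w (projIcc a b hab t)
  have hv : Continuous v := hw.comp_continuous (continuous_subtype_val.comp continuous_projIcc)
    fun t => (projIcc a b hab t).2
  have hvw : EqOn v w (Icc a b) := fun t ht => by simp only [v, projIcc_of_mem hab ht]
  obtain ⟨M, hM⟩ : ∃ M, ∀ t, ‖v t‖ ≤ M := by
    obtain ⟨M, hM⟩ := isCompact_Icc.exists_bound_of_continuousOn hw
    exact ⟨M, fun t => hM _ (projIcc a b hab t).2⟩
  set F : ℝ → ℝ → ℝ := fun x => (Iic (x - a)).indicator fun t => θ t * v (x - t)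
  have hF : Continuous fun x => ∫ t in Ioc 0 (b - a), F x t := by
    refine continuous_iff_continuousAt.2 fun x₀ => continuousAt_of_dominated
      (bound := fun t => ‖θ t‖ * M) ?_ ?_ (hθ.norm.mul_const M) ?_
    · exact .of_forall fun x => (hθ.aestronglyMeasurable.mul
        (hv.comp (continuous_sub_left x)).aestronglyMeasurable).indicator measurableSet_Iic
    · refine .of_forall fun x => .of_forall fun t => ?_
      simp only [F, indicator_apply]
      split_ifs
      · rw [norm_mul]; exact mul_le_mul_of_nonneg_left (hM _) (norm_nonneg _)
      · simpa using mul_nonneg (norm_nonneg (θ t)) ((norm_nonneg _).trans (hM 0))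
    · filter_upwards [ae_restrict_of_ae (Measure.ae_ne volume (x₀ - a))] with t ht
      rcases ht.lt_or_gt with ht | ht
      · refine ContinuousAt.congr_of_eventuallyEq (f := fun x => θ t * v (x - t))
          (by fun_prop) ?_
        filter_upwards [eventually_gt_nhds (show a + t < x₀ by linarith)] with x hx
        exact indicator_of_mem (mem_Iic.2 (by linarith)) _
      · refine (continuousAt_const (y := (0 : ℝ))).congr_of_eventuallyEq ?_
        filter_upwards [eventually_lt_nhds (show x₀ < a + t by linarith)] with x hx
        exact indicator_of_notMem (fun h => by linarith [mem_Iic.1 h]) _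
  refine hF.continuousOn.congr fun x hx => ?_
  simp only [F]
  rw [leftConv_congr_fun hx.1 (fun s hs => (hvw (Ioo_subset_Icc_self.trans
      (Icc_subset_Icc_right hx.2) hs)).symm), leftConv_eq_integral_sub,
    integral_of_le (sub_nonneg.2 hx.1), setIntegral_indicator measurableSet_Iic, Ioc_inter_Iic,
    min_eq_right (by linarith [hx.2])]

theorem eqOn_zero_of_integral_eq_zero {F : ℝ → ℝ} (hab : a < b) (hF : ContinuousOn F (Icc a b))
    (h0 : ∀ x ∈ Ioo a b, ∫ s in a..x, F s = 0) : EqOn F 0 (Icc a b) := by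
  have hIoo : EqOn F 0 (Ioo a b) := fun x hx => by
    have hderiv : HasDerivAt (fun u => ∫ s in a..u, F s) (F x) x :=
      integral_hasDerivAt_right
        ((hF.mono (Icc_subset_Icc_right hx.2.le)).intervalIntegrable_of_Icc hx.1.le)
        ((hF.mono Ioo_subset_Icc_self).stronglyMeasurableAtFilter isOpen_Ioo x hx)
        (hF.continuousAt (Icc_mem_nhds hx.1 hx.2))
    exact hderiv.unique ((hasDerivAt_const x 0).congr_of_eventuallyEq
      (Filter.eventuallyEq_of_mem (isOpen_Ioo.mem_nhds hx) h0))
  simpa [closure_Ioo hab.ne] using hIoo.of_subset_closure hF continuousOn_const Ioo_subset_Icc_self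

theorem integral_integral_swap_triangle (hax : a ≤ x) {G : ℝ → ℝ → ℝ}
    (hG : Integrable ({p : ℝ × ℝ | p.2 ≤ p.1}.indicator (Function.uncurry G))
      ((volume.restrict (Ioc a x)).prod (volume.restrict (Ioc a x)))) :
    ∫ s in a..x, ∫ u in a..s, G s u = ∫ u in a..x, ∫ s in u..x, G s u := by
  have hslice : ∀ s u, {p : ℝ × ℝ | p.2 ≤ p.1}.indicator (Function.uncurry G) (s, u)
      = (Iic s).indicator (G s) u := fun s u => by simp [indicator_apply]
  have hslice' : ∀ s u, (Iic s).indicator (G s) u = (Ici u).indicator (G · u) s :=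
    fun s u => by simp [indicator_apply]
  have hswap := integral_integral_swap (f := fun s u => (Iic s).indicator (G s) u)
    (hG.congr (.of_forall fun p => hslice p.1 p.2))
  rw [integral_of_le hax, integral_of_le hax]
  convert hswap using 1
  · refine setIntegral_congr_fun measurableSet_Ioc fun s hs => ?_
    rw [setIntegral_indicator measurableSet_Iic, Ioc_inter_Iic, min_eq_right hs.2,
      integral_of_le hs.1.le]
  · refine setIntegral_congr_fun measurableSet_Ioc fun u hu => ?_
    have hIcc : Ioc a x ∩ Ici u = Icc u x := by
      ext s
      simp only [mem_inter_iff, mem_Ioc, mem_Ici, mem_Icc]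
      constructor
      · rintro ⟨⟨-, hsx⟩, hus⟩; exact ⟨hus, hsx⟩
      · rintro ⟨hus, hsx⟩; exact ⟨⟨hu.1.trans_le hus, hsx⟩, hus⟩
    simp only [hslice']
    rw [setIntegral_indicator measurableSet_Ici, hIcc, integral_Icc_eq_integral_Ioc,
      integral_of_le hu.2]

theorem setIntegral_norm_comp_sub_le (hθ : IntegrableOn θ (Ioc 0 (b - a))) (hx : x ∈ Icc a b) :
    ∫ u in Ioc a x, ‖θ (x - u)‖ ≤ ∫ t in Ioc 0 (b - a), ‖θ t‖ := by
  have hsub : ∫ u in a..x, ‖θ (x - u)‖ = ∫ t in 0..x - a, ‖θ t‖ := by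
    simpa using integral_comp_sub_left (fun t => ‖θ t‖) x (a := a) (b := x)
  rw [← integral_of_le hx.1, hsub, integral_of_le (sub_nonneg.2 hx.1)]
  exact setIntegral_mono_set hθ.norm (.of_forall fun _ => norm_nonneg _)
    (Ioc_subset_Ioc_right (by linarith [hx.2])).eventuallyLE

theorem integral_norm_leftConv_integrand_le (hθ : IntegrableOn θ (Ioc 0 (b - a))) {M : ℝ}
    (hM : ∀ u ∈ Icc a b, ‖w u‖ ≤ M) (hx : x ∈ Icc a b) :
    ∫ u in Ioc a x, ‖θ (x - u) * w u‖ ≤ M * ∫ t in Ioc 0 (b - a), ‖θ t‖ := by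
  have hM0 : 0 ≤ M := (norm_nonneg _).trans (hM a (left_mem_Icc.2 (hx.1.trans hx.2)))
  calc ∫ u in Ioc a x, ‖θ (x - u) * w u‖
      ≤ ∫ u in Ioc a x, M * ‖θ (x - u)‖ := by
        refine integral_mono_of_nonneg (.of_forall fun _ => norm_nonneg _)
          ((integrableOn_comp_sub_left hθ hx).norm.const_mul _) ?_
        filter_upwards [ae_restrict_mem measurableSet_Ioc] with u hu
        rw [norm_mul, mul_comm]
        exact mul_le_mul_of_nonneg_right (hM u ⟨hu.1.le, hu.2.trans hx.2⟩) (norm_nonneg _)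
    _ = M * ∫ u in Ioc a x, ‖θ (x - u)‖ := integral_const_mul _ _
    _ ≤ M * ∫ t in Ioc 0 (b - a), ‖θ t‖ :=
        mul_le_mul_of_nonneg_left (setIntegral_norm_comp_sub_le hθ hx) hM0

theorem integrable_leftConv_assoc_integrand (hρm : Measurable ρ) (hθm : Measurable θ)
    (hρ : IntegrableOn ρ (Ioc 0 (b - a))) (hθ : IntegrableOn θ (Ioc 0 (b - a)))
    (hw : ContinuousOn w (Icc a b)) (hx : x ∈ Icc a b) :
    Integrable ({p : ℝ × ℝ | p.2 ≤ p.1}.indicator fun p => ρ (x - p.1) * θ (p.1 - p.2) * w p.2)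
      ((volume.restrict (Ioc a x)).prod (volume.restrict (Ioc a x))) := by
  set μ := volume.restrict (Ioc a x)
  have hIoc : Ioc a x ⊆ Icc a b := Ioc_subset_Icc_self.trans (Icc_subset_Icc_right hx.2)
  obtain ⟨M, hM⟩ := isCompact_Icc.exists_bound_of_continuousOn hw
  have hmeas : AEStronglyMeasurable
      ({p : ℝ × ℝ | p.2 ≤ p.1}.indicator fun p => ρ (x - p.1) * θ (p.1 - p.2) * w p.2)
      (μ.prod μ) := by
    have hρθ : Measurable fun p : ℝ × ℝ => ρ (x - p.1) * θ (p.1 - p.2) := by fun_prop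
    exact (hρθ.aestronglyMeasurable.mul ((hw.mono hIoc).aestronglyMeasurable
      measurableSet_Ioc).comp_snd).indicator (measurableSet_le measurable_snd measurable_fst)
  have hslice : ∀ s u,
      {p : ℝ × ℝ | p.2 ≤ p.1}.indicator (fun p => ρ (x - p.1) * θ (p.1 - p.2) * w p.2) (s, u)
        = (Iic s).indicator (fun u => ρ (x - s) * (θ (s - u) * w u)) u := fun s u => by
    simp [indicator_apply, mul_assoc]
  have hrestrict : ∀ s ∈ Ioc a x, μ.restrict (Iic s) = volume.restrict (Ioc a s) := fun s hs => by
    rw [Measure.restrict_restrict measurableSet_Iic, inter_comm, Ioc_inter_Iic, min_eq_right hs.2]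
  rw [integrable_prod_iff hmeas]
  constructor
  · filter_upwards [ae_restrict_mem measurableSet_Ioc] with s hs
    simp only [hslice s]
    rw [integrable_indicator_iff measurableSet_Iic, IntegrableOn, hrestrict s hs]
    exact (integrableOn_leftConv_integrand hθ hw ⟨hs.1.le, hs.2.trans hx.2⟩).const_mul _
  · refine Integrable.mono' ((integrableOn_comp_sub_left hρ hx).norm.mul_const
      (M * ∫ t in Ioc 0 (b - a), ‖θ t‖)) hmeas.norm.integral_prod_right' ?_
    filter_upwards [ae_restrict_mem measurableSet_Ioc] with s hs
    simp only [hslice s, norm_indicator_eq_indicator_norm, norm_mul (ρ (x - s))]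
    rw [MeasureTheory.integral_indicator measurableSet_Iic, hrestrict s hs,
      MeasureTheory.integral_const_mul, Real.norm_of_nonneg
        (mul_nonneg (norm_nonneg _) (integral_nonneg fun _ => norm_nonneg _))]
    exact mul_le_mul_of_nonneg_left (integral_norm_leftConv_integrand_le hθ hM (hIoc hs))
      (norm_nonneg _)

theorem leftConv_assoc (hρm : Measurable ρ) (hθm : Measurable θ)
    (hρ : IntegrableOn ρ (Ioc 0 (b - a))) (hθ : IntegrableOn θ (Ioc 0 (b - a)))
    (hw : ContinuousOn w (Icc a b)) (hx : x ∈ Icc a b) :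
    leftConv a ρ (leftConv a θ w) x = leftConv a (leftConv 0 ρ θ) w x := by
  have hswap := integral_integral_swap_triangle hx.1
    (G := fun s u => ρ (x - s) * θ (s - u) * w u)
    (integrable_leftConv_assoc_integrand hρm hθm hρ hθ hw hx)
  have hsub : ∀ u, ∫ s in u..x, ρ (x - s) * θ (s - u) = leftConv 0 ρ θ (x - u) := fun u => by
    simpa [leftConv, sub_sub_sub_cancel_right] using
      integral_comp_sub_right (fun v => ρ (x - u - v) * θ v) u (a := u) (b := x)
  calc leftConv a ρ (leftConv a θ w) x
      = ∫ s in a..x, ∫ u in a..s, ρ (x - s) * θ (s - u) * w u := by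
        simp only [leftConv, ← intervalIntegral.integral_const_mul, mul_assoc]
    _ = ∫ u in a..x, (∫ s in u..x, ρ (x - s) * θ (s - u)) * w u := by
        simp only [hswap, ← intervalIntegral.integral_mul_const]
    _ = leftConv a (leftConv 0 ρ θ) w x := by
        simp only [hsub]
        rfl

theorem continuous_powKernel (m : ℕ) : Continuous (powKernel m) :=
  (continuous_pow m).div_const _

theorem eqOn_zero_of_leftConv_powKernel_eq_zero (hab : a < b) (hw : ContinuousOn w (Icc a b))
    (m : ℕ) (h0 : ∀ x ∈ Ioo a b, leftConv a (powKernel m) w x = 0) : EqOn w 0 (Icc a b) := by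
  induction m with
  | zero =>
    refine eqOn_zero_of_integral_eq_zero hab hw fun x hx => ?_
    simpa [leftConv, powKernel] using h0 x hx
  | succ m ih =>
    refine ih fun x hx => eqOn_zero_of_integral_eq_zero hab
      (continuousOn_leftConv hab.le (continuous_powKernel m).integrableOn_Ioc hw)
      (fun y hy => ?_) (Ioo_subset_Icc_self hx)
    rw [← leftConv_one, leftConv_assoc measurable_const (continuous_powKernel m).measurable
      continuous_const.integrableOn_Ioc (continuous_powKernel m).integrableOn_Ioc hw
      (Ioo_subset_Icc_self hy), leftConv_one_powKernel, h0 y hy]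

theorem iteratedDerivWithin_Icc_eq_of_lt {f : ℝ → ℝ} (n : ℕ) (hxb : x ≤ b) {t : ℝ}
    (ht : t < x) :
    iteratedDerivWithin n f (Icc a x) t = iteratedDerivWithin n f (Icc a b) t := by
  simp only [iteratedDerivWithin]
  rw [iteratedFDerivWithin_congr_set (Filter.eventuallyEq_set.2 ?_)]
  filter_upwards [Iio_mem_nhds ht] with u hu
  exact ⟨fun h => ⟨h.1, h.2.trans hxb⟩, fun h => ⟨h.1, le_of_lt hu⟩⟩

theorem eq_leftConv_powKernel_iteratedDerivWithin {φ : ℝ → ℝ} {m : ℕ}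
    (hφ : ContDiffOn ℝ (m + 1 : ℕ) φ (Icc a b))
    (hφa : ∀ j ≤ m, iteratedDerivWithin j φ (Icc a b) a = 0) (hx : x ∈ Ioc a b) :
    φ x = leftConv a (powKernel m) (iteratedDerivWithin (m + 1) φ (Icc a b)) x := by
  have htaylor := taylor_integral_remainder (x₀ := a) (x := x)
    (hφ.mono (uIcc_of_le hx.1.le ▸ Icc_subset_Icc_right hx.2))
  have hpoly : taylorWithinEval φ m (uIcc a x) a x = 0 := by
    rw [taylor_within_apply]
    refine Finset.sum_eq_zero fun j hj => ?_
    rw [uIcc_of_le hx.1.le, iteratedDerivWithin_Icc_eq_of_lt j hx.2 hx.1,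
      hφa j (Finset.mem_range_succ_iff.1 hj), smul_zero]
  rw [hpoly, sub_zero] at htaylor
  rw [htaylor]
  refine integral_congr_uIoo fun t ht => ?_
  rw [uIoo_of_le hx.1.le] at ht
  rw [uIcc_of_le hx.1.le, iteratedDerivWithin_Icc_eq_of_lt _ hx.2 ht.2, smul_eq_mul, powKernel]

end

theorem first_fundamental_left_caputo_general
    (a b : ℝ) (hab : a < b) (n : ℕ) (hn : 1 ≤ n)
    (k κ : ℝ → ℝ) (hkm : Measurable k) (hκm : Measurable κ)
    (hkI : IntegrableOn k (Ioc 0 (b - a)))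
    (hκI : IntegrableOn κ (Ioc 0 (b - a)))
    (hSonine : ∀ y, 0 < y → y ≤ b - a →
      ∫ s in (0:ℝ)..y, k (y - s) * κ s = y ^ (n - 1) / (n - 1).factorial)
    (f φ : ℝ → ℝ) (hf : ContinuousOn f (Icc a b))
    (hφ : φ = fun x => ∫ s in a..x, κ (x - s) * f s)
    (hφC : ContDiffOn ℝ n φ (Icc a b))
    (hφa : ∀ j ≤ n - 1, iteratedDerivWithin j φ (Icc a b) a = 0) :
    ∀ x ∈ Ioc a b,
      (∫ s in a..x, k (x - s) * iteratedDerivWithin n φ (Icc a b) s) = f x := by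
  obtain ⟨m, rfl⟩ : ∃ m, n = m + 1 := ⟨n - 1, by omega⟩
  simp only [Nat.add_sub_cancel] at hSonine hφa
  set g := iteratedDerivWithin (m + 1) φ (Icc a b)
  have hg : ContinuousOn g (Icc a b) :=
    hφC.continuousOn_iteratedDerivWithin le_rfl (uniqueDiffOn_Icc hab)
  have hkg : ContinuousOn (leftConv a k g) (Icc a b) := continuousOn_leftConv hab.le hkI hg
  set h := fun s => leftConv a k g s - f s
  have hh : ContinuousOn h (Icc a b) := hkg.sub hf
  have hkκ : ∀ y ∈ Ioc a b, EqOn (leftConv 0 k κ) (powKernel m) (Ioo 0 (y - a)) :=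
    fun y hy t ht => hSonine t ht.1 (by linarith [ht.2, hy.2])
  have hκh : ∀ y ∈ Ioc a b, leftConv a κ h y = 0 := fun y hy => by
    have hφy : φ y = leftConv a κ f y := congrFun hφ y
    rw [leftConv_sub hκI hkg hf (Ioc_subset_Icc_self hy),
      leftConv_assoc hκm hkm hκI hkI hg (Ioc_subset_Icc_self hy),
      leftConv_congr_kernel hy.1.le fun t ht => (leftConv_zero_comm κ k t).trans (hkκ y hy ht),
      ← eq_leftConv_powKernel_iteratedDerivWithin hφC hφa hy, hφy, sub_self]
  have hpowh : ∀ y ∈ Ioo a b, leftConv a (powKernel m) h y = 0 := fun y hy => by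
    rw [← leftConv_congr_kernel hy.1.le (hkκ y (Ioo_subset_Ioc_self hy)),
      ← leftConv_assoc hkm hκm hkI hκI hh (Ioo_subset_Icc_self hy),
      leftConv_congr_fun hy.1.le (w' := 0) fun s hs => hκh s ⟨hs.1, hs.2.le.trans hy.2.le⟩]
    simp [leftConv]
  intro x hx
  exact sub_eq_zero.1
    (eqOn_zero_of_leftConv_powKernel_eq_zero hab hh m hpowh (Ioc_subset_Icc_self hx))

/-- **First fundamental theorem of general fractional calculus, left Caputo case.**
If `(k, κ)` satisfy the modified Sonine condition of order `n` on `(0, b-a]`, `k` is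
`(n-1)`-times continuously differentiable on `(0, b-a]` with integrable derivatives,
`f : [a,b] → ℝ` is continuous, and `φ := I_κ f` is `n`-times continuously differentiable
on `[a,b]` with `φ⁽ʲ⁾(a) = 0` for `0 ≤ j ≤ n-1`, then for every `x ∈ (a, b]` one has
`ᶜD_k (I_κ f)(x) = f(x)`. -/
theorem first_fundamental_left_caputo
    (a b : ℝ) (hab : a < b) (n : ℕ) (hn : 1 ≤ n)
    (k κ : ℝ → ℝ) (hkm : Measurable k) (hκm : Measurable κ)
    (hkI : IntegrableOn k (Ioc 0 (b - a)))
    (hκI : IntegrableOn κ (Ioc 0 (b - a)))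
    (hSonine : ∀ y, 0 < y → y ≤ b - a →
      ∫ s in (0:ℝ)..y, k (y - s) * κ s = y ^ (n - 1) / (n - 1).factorial)
    (hkC : ContDiffOn ℝ (n - 1) k (Ioc 0 (b - a)))
    (hkD : ∀ j ≤ n - 1,
      IntegrableOn (iteratedDerivWithin j k (Ioc 0 (b - a))) (Ioc 0 (b - a)))
    (f φ : ℝ → ℝ) (hf : ContinuousOn f (Icc a b))
    (hφ : φ = fun x => ∫ s in a..x, κ (x - s) * f s)
    (hφC : ContDiffOn ℝ n φ (Icc a b))
    (hφa : ∀ j ≤ n - 1, iteratedDerivWithin j φ (Icc a b) a = 0) :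
    ∀ x ∈ Ioc a b,
      (∫ s in a..x, k (x - s) * iteratedDerivWithin n φ (Icc a b) s) = f x :=
  first_fundamental_left_caputo_general a b hab n hn k κ hkm hκm hkI hκI hSonine f φ hf hφ hφC hφa
end

section
/- (Linear independence of the Jacobi convolution series.) Let α, β > −1 and let k, κ : ℝ → ℝ be measurable, integrable on (0, 1], satisfying the Sonine condition ∫_0^x k(x−t) κ(t) dt = 1 for all 0 < x ≤ 1. Let φ_n(x) = ∫_0^x κ(x−t) P̃_n^{α,β}(t) dt. Then for every N ∈ ℕ the functions φ_0, φ_1, …, φ_N are linearly independent: if c_0, …, c_N ∈ ℝ satisfy Σ_{i=0}^{N} c_i φ_i(x) = 0 for all x ∈ (0,1], then c_i = 0 for all 0 ≤ i ≤ N. -/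
/-!
Put `p = Σ cᵢ P̃ᵢ`. The hypothesis says that the Volterra convolution of `κ` with `p` vanishes on
`(0,1]`. Convolving once more with `k` and using associativity, the Sonine condition `k ⋆ κ = 1`
turns this into `∫₀ˣ p = 0` for every `x ∈ (0,1]`, so `p` vanishes on `(0,1)` and is the zero
polynomial. Since `α, β > -1`, every Gamma quotient in the definition of `P̃ₙ` is positive, so
`P̃ₙ` has degree exactly `n` and the coefficients `cᵢ` vanish.

Associativity is that of Mathlib's convolution on `ℝ`, applied to the extensions by zero of
`k`, `κ`, `p` from `(0,1]`: for functions supported in `(0, ∞)` it is the one-sided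
convolution `∫₀ˣ`.
-/

open MeasureTheory intervalIntegral Set

/-- The Jacobi polynomial `P_n^{α,β}` on `[-1,1]`, written via the Euler Gamma function. -/
noncomputable def jacobiP (α β : ℝ) (n : ℕ) (x : ℝ) : ℝ :=
  (2 : ℝ) ^ (-(n : ℤ)) * ∑ k ∈ Finset.range (n + 1),
    (Real.Gamma ((n : ℝ) + α + 1) /
        (Real.Gamma ((k : ℝ) + 1) * Real.Gamma ((n : ℝ) + α - (k : ℝ) + 1))) *
      (Real.Gamma ((n : ℝ) + β + 1) /
        (Real.Gamma ((n : ℝ) - (k : ℝ) + 1) * Real.Gamma (β + (k : ℝ) + 1))) *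
      (x - 1) ^ (n - k) * (x + 1) ^ k

/-- The shifted Jacobi polynomial `P̃_n^{α,β}` on `[0,1]`. -/
noncomputable def shiftedJacobiP (α β : ℝ) (n : ℕ) (x : ℝ) : ℝ :=
  jacobiP α β n (2 * x - 1)

/-- The `n`-th left Jacobi convolution series `φ_n(x) = ∫_0^x κ(x-t) P̃_n^{α,β}(t) dt`. -/
noncomputable def leftJacobiConv (κ : ℝ → ℝ) (α β : ℝ) (n : ℕ) (x : ℝ) : ℝ :=
  ∫ t in (0:ℝ)..x, κ (x - t) * shiftedJacobiP α β n t

open Polynomial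

namespace Polynomial

theorem degree_sum_C_mul_monic {R ι : Type*} [CommRing R] {s : Finset ι} {a : ι → R}
    {m : ι → R[X]} {n : ℕ} (hm : ∀ i ∈ s, (m i).Monic ∧ (m i).natDegree = n)
    (ha : ∑ i ∈ s, a i ≠ 0) : (∑ i ∈ s, C (a i) * m i).degree = n := by
  refine degree_eq_of_le_of_coeff_ne_zero ?_ ?_
  · refine (degree_sum_le _ _).trans (Finset.sup_le fun i hi => ?_)
    rw [C_mul']
    exact (degree_smul_le _ _).trans ((hm i hi).2 ▸ degree_le_natDegree)
  · rwa [finsetSum_coeff, Finset.sum_congr rfl fun i hi => by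
      rw [coeff_C_mul, ← (hm i hi).2, (hm i hi).1.coeff_natDegree, mul_one]]

theorem monic_X_sub_one_pow_mul_X_add_one_pow {R : Type*} [CommRing R] (n k : ℕ) :
    ((X - 1 : R[X]) ^ (n - k) * (X + 1) ^ k).Monic := by
  simpa using ((monic_X_sub_C (1 : R)).pow (n - k)).mul ((monic_X_add_C (1 : R)).pow k)

theorem natDegree_X_sub_one_pow_mul_X_add_one_pow {R : Type*} [CommRing R] [Nontrivial R]
    {n k : ℕ} (hk : k ≤ n) : ((X - 1 : R[X]) ^ (n - k) * (X + 1) ^ k).natDegree = n := by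
  have h := ((monic_X_sub_C (1 : R)).pow (n - k)).natDegree_mul ((monic_X_add_C (1 : R)).pow k)
  rw [(monic_X_sub_C _).natDegree_pow, natDegree_X_sub_C, natDegree_pow_X_add_C, map_one] at h
  omega

end Polynomial

noncomputable def jacobiCoeff (α β : ℝ) (n k : ℕ) : ℝ :=
  Real.Gamma ((n : ℝ) + α + 1) /
      (Real.Gamma ((k : ℝ) + 1) * Real.Gamma ((n : ℝ) + α - (k : ℝ) + 1)) *
    (Real.Gamma ((n : ℝ) + β + 1) /
      (Real.Gamma ((n : ℝ) - (k : ℝ) + 1) * Real.Gamma (β + (k : ℝ) + 1)))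

noncomputable def shiftedJacobiPoly (α β : ℝ) (n : ℕ) : ℝ[X] :=
  (C ((2 : ℝ) ^ (-(n : ℤ))) * ∑ k ∈ Finset.range (n + 1),
    C (jacobiCoeff α β n k) * ((X - 1) ^ (n - k) * (X + 1) ^ k)).comp (2 * X - 1)

theorem eval_shiftedJacobiPoly (α β : ℝ) (n : ℕ) (x : ℝ) :
    (shiftedJacobiPoly α β n).eval x = shiftedJacobiP α β n x := by
  simp [shiftedJacobiPoly, shiftedJacobiP, jacobiP, jacobiCoeff, eval_finsetSum, mul_assoc]

theorem jacobiCoeff_pos {α β : ℝ} (hα : -1 < α) (hβ : -1 < β) {n k : ℕ} (hk : k ≤ n) :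
    0 < jacobiCoeff α β n k := by
  have hk' : (k : ℝ) ≤ n := by exact_mod_cast hk
  have := k.cast_nonneg (α := ℝ)
  unfold jacobiCoeff
  have := Real.Gamma_pos_of_pos (s := (n : ℝ) + α + 1) (by linarith)
  have := Real.Gamma_pos_of_pos (s := (k : ℝ) + 1) (by linarith)
  have := Real.Gamma_pos_of_pos (s := (n : ℝ) + α - k + 1) (by linarith)
  have := Real.Gamma_pos_of_pos (s := (n : ℝ) + β + 1) (by linarith)
  have := Real.Gamma_pos_of_pos (s := (n : ℝ) - k + 1) (by linarith)
  have := Real.Gamma_pos_of_pos (s := β + k + 1) (by linarith)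
  positivity

theorem degree_shiftedJacobiPoly {α β : ℝ} (hα : -1 < α) (hβ : -1 < β) (n : ℕ) :
    (shiftedJacobiPoly α β n).degree = n := by
  have hsum : (∑ k ∈ Finset.range (n + 1), C (jacobiCoeff α β n k) *
      ((X - 1 : ℝ[X]) ^ (n - k) * (X + 1) ^ k)).degree = (n : WithBot ℕ) := by
    refine degree_sum_C_mul_monic (fun k hk => ⟨monic_X_sub_one_pow_mul_X_add_one_pow n k,
      natDegree_X_sub_one_pow_mul_X_add_one_pow (Finset.mem_range_succ_iff.mp hk)⟩) ?_
    exact (Finset.sum_pos (fun k hk => jacobiCoeff_pos hα hβ (Finset.mem_range_succ_iff.mp hk))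
      Finset.nonempty_range_add_one).ne'
  have hlin : (2 * X - 1 : ℝ[X]).degree = 1 := by compute_degree!
  unfold shiftedJacobiPoly
  rw [degree_comp (by rw [hlin]; exact zero_lt_one), hlin, mul_one,
    degree_C_mul (by positivity), hsum]

noncomputable def shiftedJacobiSequence {α β : ℝ} (hα : -1 < α) (hβ : -1 < β) :
    Polynomial.Sequence ℝ where
  elems' := shiftedJacobiPoly α β
  degree_eq' := degree_shiftedJacobiPoly hα hβ

section Convolution

open scoped Convolution
open ContinuousLinearMap

theorem convolution_eq_posConvolution {E E' F : Type*} [NormedAddCommGroup E]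
    [NormedSpace ℝ E] [NormedAddCommGroup E'] [NormedSpace ℝ E'] [NormedAddCommGroup F]
    [NormedSpace ℝ F] {f : ℝ → E} {g : ℝ → E'} (hf : f.support ⊆ Ioi 0) (hg : g.support ⊆ Ioi 0)
    (L : E →L[ℝ] E' →L[ℝ] F) : f ⋆[L] g = posConvolution f g L := by
  rw [posConvolution_eq_convolution_indicator f g L volume, indicator_eq_self.mpr hf,
    indicator_eq_self.mpr hg]

theorem support_convolution_subset_Ioi {f g : ℝ → ℝ} (hf : f.support ⊆ Ioi 0)
    (hg : g.support ⊆ Ioi 0) : (f ⋆[mul ℝ ℝ] g).support ⊆ Ioi 0 := by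
  rw [convolution_eq_posConvolution hf hg]
  exact support_indicator_subset

theorem convolution_apply_of_eqOn_Ioc {f g f' g' : ℝ → ℝ} {a x : ℝ} (hf : f.support ⊆ Ioi 0)
    (hg : g.support ⊆ Ioi 0) (hff' : EqOn f f' (Ioc 0 a)) (hgg' : EqOn g g' (Ioc 0 a))
    (hx : x ∈ Ioc 0 a) : (f ⋆[mul ℝ ℝ] g) x = ∫ t in (0 : ℝ)..x, f' t * g' (x - t) := by
  rw [convolution_eq_posConvolution hf hg, posConvolution, indicator_of_mem (mem_Ioi.mpr hx.1)]
  refine intervalIntegral.integral_congr_ae ?_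
  filter_upwards [measure_eq_zero_iff_ae_notMem.mp (measure_singleton x)] with t htx ht
  rw [uIoc_of_le hx.1.le] at ht
  have hxt : x - t ∈ Ioc 0 a := ⟨sub_pos.mpr (lt_of_le_of_ne ht.2 htx), by linarith [ht.1, hx.2]⟩
  simp only [mul_apply', hff' ⟨ht.1, ht.2.trans hx.2⟩, hgg' hxt]

theorem intervalIntegral_mul_sub_comm (f g : ℝ → ℝ) (x : ℝ) :
    ∫ t in (0 : ℝ)..x, f t * g (x - t) = ∫ t in (0 : ℝ)..x, f (x - t) * g t := by
  simpa using
    (intervalIntegral.integral_comp_sub_left (a := 0) (b := x) (fun t => f t * g (x - t)) x).symm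

section

variable {G : Type*} [AddCommGroup G] [MeasurableSpace G] {μ : Measure G}

theorem MeasureTheory.Integrable.convolutionExistsAt_of_bounded [MeasurableAdd₂ G]
    [MeasurableNeg G] [SFinite μ] [μ.IsAddLeftInvariant] {E E' F : Type*} [NormedAddCommGroup E]
    [NormedSpace ℝ E] [NormedAddCommGroup E'] [NormedSpace ℝ E'] [NormedAddCommGroup F]
    [NormedSpace ℝ F]
    (L : E →L[ℝ] E' →L[ℝ] F) {f : G → E} {g : G → E'} {M : ℝ}
    (hf : Integrable f μ) (hg : AEStronglyMeasurable g μ) (hM : ∀ t, ‖g t‖ ≤ M) (x : G) :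
    ConvolutionExistsAt f g x L μ :=
  BddAbove.convolutionExistsAt L ⟨M, by rintro _ ⟨t, -, rfl⟩; exact hM t⟩ MeasurableSet.univ
    (subset_univ _) hf.integrableOn hg

theorem norm_convolution_norm_le_integral_mul {g h : G → ℝ} {M : ℝ} (hg : Integrable g μ)
    (hM : ∀ t, ‖h t‖ ≤ M) (x : G) :
    ‖((fun t => ‖g t‖) ⋆[mul ℝ ℝ, μ] fun t => ‖h t‖) x‖ ≤ (∫ t, ‖g t‖ ∂μ) * M := by
  rw [convolution_def, ← MeasureTheory.integral_mul_const]
  refine norm_integral_le_of_norm_le (hg.norm.mul_const M) (ae_of_all _ fun t => ?_)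
  simp only [mul_apply', norm_mul, norm_norm]
  exact mul_le_mul_of_nonneg_left (hM _) (norm_nonneg _)

theorem convolution_assoc_of_bounded [MeasurableAdd₂ G] [MeasurableNeg G] [SFinite μ]
    [μ.IsAddLeftInvariant] [μ.IsAddRightInvariant]
    {f g h : G → ℝ} {M : ℝ} (hf : Integrable f μ) (hg : Integrable g μ) (hh : Integrable h μ)
    (hM : ∀ t, ‖h t‖ ≤ M) (x : G) :
    ((f ⋆[mul ℝ ℝ, μ] g) ⋆[mul ℝ ℝ, μ] h) x = (f ⋆[mul ℝ ℝ, μ] (g ⋆[mul ℝ ℝ, μ] h)) x := by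
  refine convolution_assoc (mul ℝ ℝ) (mul ℝ ℝ) (mul ℝ ℝ) (mul ℝ ℝ) (fun a b c => mul_assoc a b c)
    hf.1 hg.1 hh.1 (hf.ae_convolution_exists _ hg) (ae_of_all _ fun y => ?_) ?_
  · exact hg.norm.convolutionExistsAt_of_bounded _ hh.1.norm (by simpa using hM) y
  · exact hf.norm.convolutionExistsAt_of_bounded _
      (hg.norm.integrable_convolution _ hh.norm).1 (norm_convolution_norm_le_integral_mul hg hM) x

end

theorem intervalIntegral_eq_zero_of_sonine {k κ P : ℝ → ℝ} {a : ℝ}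
    (hk : IntegrableOn k (Ioc 0 a)) (hκ : IntegrableOn κ (Ioc 0 a))
    (hP : ContinuousOn P (Icc 0 a))
    (hSonine : ∀ x : ℝ, 0 < x → x ≤ a → ∫ t in (0 : ℝ)..x, k (x - t) * κ t = 1)
    (hvanish : ∀ x ∈ Ioc 0 a, ∫ t in (0 : ℝ)..x, κ (x - t) * P t = 0) :
    ∀ x ∈ Ioc 0 a, ∫ t in (0 : ℝ)..x, P t = 0 := by
  intro x hx
  set K := (Ioc 0 a).indicator k
  set C := (Ioc 0 a).indicator κ
  set Q := (Ioc 0 a).indicator P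
  have hsupp : ∀ f : ℝ → ℝ, ((Ioc 0 a).indicator f).support ⊆ Ioi 0 := fun f =>
    support_indicator_subset.trans Ioc_subset_Ioi_self
  obtain ⟨M, hM⟩ := isCompact_Icc.exists_bound_of_continuousOn hP
  have hQM : ∀ t, ‖Q t‖ ≤ M := fun t => by
    rw [norm_indicator_eq_indicator_norm]
    exact indicator_apply_le' (fun ht => hM t (Ioc_subset_Icc_self ht))
      fun _ => (norm_nonneg _).trans (hM x (Ioc_subset_Icc_self hx))
  have hKC : EqOn (K ⋆[mul ℝ ℝ] C) 1 (Ioc 0 a) := fun y hy => by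
    rw [convolution_apply_of_eqOn_Ioc (hsupp k) (hsupp κ) eqOn_indicator eqOn_indicator hy,
      intervalIntegral_mul_sub_comm, hSonine y hy.1 hy.2, Pi.one_apply]
  have hCQ : EqOn (C ⋆[mul ℝ ℝ] Q) 0 (Ioc 0 a) := fun y hy => by
    rw [convolution_apply_of_eqOn_Ioc (hsupp κ) (hsupp P) eqOn_indicator eqOn_indicator hy,
      intervalIntegral_mul_sub_comm, hvanish y hy, Pi.zero_apply]
  calc ∫ t in (0 : ℝ)..x, P t = ∫ t in (0 : ℝ)..x, (1 : ℝ → ℝ) t * P (x - t) := by simp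
    _ = ((K ⋆[mul ℝ ℝ] C) ⋆[mul ℝ ℝ] Q) x := (convolution_apply_of_eqOn_Ioc
        (support_convolution_subset_Ioi (hsupp k) (hsupp κ)) (hsupp P) hKC eqOn_indicator hx).symm
    _ = (K ⋆[mul ℝ ℝ] (C ⋆[mul ℝ ℝ] Q)) x := convolution_assoc_of_bounded
        (hk.integrable_indicator measurableSet_Ioc) (hκ.integrable_indicator measurableSet_Ioc)
        ((hP.integrableOn_Icc.mono_set Ioc_subset_Icc_self).integrable_indicator
          measurableSet_Ioc) hQM x
    _ = ∫ t in (0 : ℝ)..x, k t * (0 : ℝ → ℝ) (x - t) := convolution_apply_of_eqOn_Ioc (hsupp k)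
        (support_convolution_subset_Ioi (hsupp κ) (hsupp P)) eqOn_indicator hCQ hx
    _ = 0 := by simp

end Convolution

theorem eqOn_zero_of_intervalIntegral_eq_zero {P : ℝ → ℝ} {a b : ℝ} (hP : Continuous P)
    (h : ∀ x ∈ Ioo a b, ∫ t in a..x, P t = 0) : EqOn P 0 (Ioo a b) := fun y hy =>
  (hP.integral_hasStrictDerivAt a y).hasDerivAt.unique <|
    (hasDerivAt_const y 0).congr_of_eventuallyEq <|
      Filter.eventually_of_mem (isOpen_Ioo.mem_nhds hy) h

theorem sum_mul_leftJacobiConv {κ : ℝ → ℝ} {x : ℝ} (hκ : IntervalIntegrable κ volume 0 x)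
    (α β : ℝ) (s : Finset ℕ) (c : ℕ → ℝ) :
    ∑ i ∈ s, c i * leftJacobiConv κ α β i x =
      ∫ t in (0 : ℝ)..x, κ (x - t) * (∑ i ∈ s, c i • shiftedJacobiPoly α β i).eval t := by
  have hκx : IntervalIntegrable (fun t => κ (x - t)) volume 0 x := by
    simpa using (hκ.comp_sub_left x).symm
  simp only [eval_finsetSum, eval_smul, smul_eq_mul, Finset.mul_sum]
  rw [intervalIntegral.integral_finsetSum fun i _ => ?_]
  · refine Finset.sum_congr rfl fun i _ => ?_
    rw [leftJacobiConv, ← intervalIntegral.integral_const_mul]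
    simp only [eval_shiftedJacobiPoly]
    congr 1 with t
    ring
  · exact hκx.mul_continuousOn
      (continuous_const.mul (shiftedJacobiPoly α β i).continuous).continuousOn

theorem leftJacobiConv_linearIndependent_general
    (α β : ℝ) (hα : -1 < α) (hβ : -1 < β)
    (k κ : ℝ → ℝ)
    (hkI : IntegrableOn k (Ioc 0 1))
    (hκI : IntegrableOn κ (Ioc 0 1))
    (hSonine : ∀ x : ℝ, 0 < x → x ≤ 1 → ∫ t in (0:ℝ)..x, k (x - t) * κ t = 1) :
    ∀ (N : ℕ) (c : ℕ → ℝ),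
      (∀ x ∈ Ioc (0:ℝ) 1, ∑ i ∈ Finset.range (N + 1), c i * leftJacobiConv κ α β i x = 0) →
      ∀ i ≤ N, c i = 0 := by
  intro N c hsum i hi
  set p := ∑ j ∈ Finset.range (N + 1), c j • shiftedJacobiPoly α β j
  have hconv : ∀ x ∈ Ioc (0 : ℝ) 1, ∫ t in (0 : ℝ)..x, κ (x - t) * p.eval t = 0 := fun x hx =>
    (sum_mul_leftJacobiConv ((intervalIntegrable_iff_integrableOn_Ioc_of_le hx.1.le).2
      (hκI.mono_set (Ioc_subset_Ioc_right hx.2))) α β _ c).symm.trans (hsum x hx)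
  have hint := intervalIntegral_eq_zero_of_sonine hkI hκI p.continuous.continuousOn hSonine hconv
  have hp : p = 0 := eq_zero_of_infinite_isRoot p <| (Ioo_infinite zero_lt_one).mono fun y hy =>
    eqOn_zero_of_intervalIntegral_eq_zero p.continuous
      (fun x hx => hint x (Ioo_subset_Ioc_self hx)) hy
  exact linearIndependent_iff'.mp (shiftedJacobiSequence hα hβ).linearIndependent _ c hp i
    (Finset.mem_range_succ_iff.mpr hi)

/-- **Linear independence of the left Jacobi convolution series.** For a Sonine pair
`(k, κ)` on `(0,1]` and `α, β > -1`, if a finite linear combination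
`Σ_{i≤N} c_i φ_i` of left Jacobi convolution series vanishes on `(0,1]`, then all the
coefficients vanish. -/
theorem leftJacobiConv_linearIndependent
    (α β : ℝ) (hα : -1 < α) (hβ : -1 < β)
    (k κ : ℝ → ℝ) (hkm : Measurable k) (hκm : Measurable κ)
    (hkI : IntegrableOn k (Ioc 0 1))
    (hκI : IntegrableOn κ (Ioc 0 1))
    (hSonine : ∀ x : ℝ, 0 < x → x ≤ 1 → ∫ t in (0:ℝ)..x, k (x - t) * κ t = 1) :
    ∀ (N : ℕ) (c : ℕ → ℝ),
      (∀ x ∈ Ioc (0:ℝ) 1, ∑ i ∈ Finset.range (N + 1), c i * leftJacobiConv κ α β i x = 0) →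
      ∀ i ≤ N, c i = 0 :=
  leftJacobiConv_linearIndependent_general α β hα hβ k κ hkI hκI hSonine
end
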